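/- Let V : ℝ → ℝ be continuous, E ∈ ℝ, and suppose that for every n ≥ 1 there exists x_n ∈ ℝ with |V(y) - E| ≤ 1/n for all y ∈ (x_n - n, x_n + n). Let χ : ℝ → [0,1] be smooth, equal to 1 on [-1/2, 1/2], supported in [-1,1], and set χ_n(x) = χ(x/n). Define ψ_n(x) = sin(n^{-1/2} x) χ_n(x - x_n) and φ_n = ψ_n / ‖ψ_n‖_{L²}. Then ‖(-φ_n'' + V φ_n) - E φ_n‖_{L²(ℝ)} → 0 as n → ∞; i.e. (φ_n) is a Weyl sequence at energy E for the operator -∂²ₓ + V, so E lies in the spectrum of -∂²ₓ + V. -/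

import Mathlib

open MeasureTheory

set_option maxHeartbeats 2000000 in
/-- Weyl sequence construction: if the continuous potential `V` is within
`1/n` of `E` on intervals `(xₙ - n, xₙ + n)`, then the normalized functions
`φₙ(x) = sin(n^{-1/2}x) χₙ(x - xₙ) / ‖·‖` satisfy
`‖ -φₙ'' + V φₙ - E φₙ ‖_{L²} → 0`. -/
theorem stmt18 (V : ℝ → ℝ) (hV : Continuous V) (E : ℝ) (x₀ : ℕ → ℝ)
    (hx : ∀ n : ℕ, 1 ≤ n →
      ∀ y ∈ Set.Ioo (x₀ n - (n : ℝ)) (x₀ n + (n : ℝ)), |V y - E| ≤ 1 / (n : ℝ))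
    (χ : ℝ → ℝ) (hχ : ContDiff ℝ (⊤ : ℕ∞) χ) (hχrange : ∀ x, χ x ∈ Set.Icc (0:ℝ) 1)
    (hχ1 : ∀ x ∈ Set.Icc (-(1:ℝ)/2) (1/2), χ x = 1)
    (hχsupp : Function.support χ ⊆ Set.Icc (-1 : ℝ) 1)
    (ψ φ : ℕ → ℝ → ℝ)
    (hψ : ∀ n x, ψ n x = Real.sin (x / Real.sqrt (n : ℝ)) * χ ((x - x₀ n) / (n : ℝ)))
    (hφ : ∀ n x, φ n x = ψ n x / (eLpNorm (ψ n) 2 volume).toReal) :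
    Filter.Tendsto
      (fun n => eLpNorm
        (fun x => (-(deriv (deriv (φ n)) x) + V x * φ n x) - E * φ n x) 2 volume)
      Filter.atTop (nhds 0) := by
  classical
  -- basic facts about χ
  have hχ0 : ∀ y : ℝ, y ∉ Set.Icc (-1:ℝ) 1 → χ y = 0 := by
    intro y hy; by_contra h; exact hy (hχsupp h)
  have hχcs : HasCompactSupport χ := HasCompactSupport.intro isCompact_Icc hχ0
  have hχi : ContDiff ℝ ((⊤ : ℕ∞) : WithTop ℕ∞) χ := hχ.of_le (by simp)
  have hχd : Differentiable ℝ χ := hχi.differentiable (by simp)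
  have hχ'c : ContDiff ℝ ((⊤ : ℕ∞) : WithTop ℕ∞) (deriv χ) := (contDiff_infty_iff_deriv.mp hχi).2
  have hχ'd : Differentiable ℝ (deriv χ) := hχ'c.differentiable (by simp)
  have hχ'cs : HasCompactSupport (deriv χ) := hχcs.deriv
  have hχ''cs : HasCompactSupport (deriv (deriv χ)) := hχ'cs.deriv
  have hχ'0 : ∀ y : ℝ, y ∉ Set.Icc (-1:ℝ) 1 → deriv χ y = 0 := by
    intro y hy
    by_contra h
    have := (support_deriv_subset (f := χ)) h
    rw [tsupport] at this
    exact hy (closure_minimal hχsupp isClosed_Icc this)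
  have hχ''0 : ∀ y : ℝ, y ∉ Set.Icc (-1:ℝ) 1 → deriv (deriv χ) y = 0 := by
    intro y hy
    by_contra h
    have := (support_deriv_subset (f := deriv χ)) h
    rw [tsupport] at this
    have h2 : Function.support (deriv χ) ⊆ Set.Icc (-1:ℝ) 1 := fun z hz => by
      by_contra hz2; exact hz (hχ'0 z hz2)
    exact hy (closure_minimal h2 isClosed_Icc this)
  obtain ⟨C1, hC1⟩ := hχ'c.continuous.bounded_above_of_compact_support hχ'cs
  obtain ⟨C2, hC2⟩ := ((contDiff_infty_iff_deriv.mp hχ'c).2.continuous).bounded_above_of_compact_support hχ''cs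
  replace hC1 : ∀ y, |deriv χ y| ≤ C1 := fun y => by
    simpa [Real.norm_eq_abs] using hC1 y
  replace hC2 : ∀ y, |deriv (deriv χ) y| ≤ C2 := fun y => by
    simpa [Real.norm_eq_abs] using hC2 y
  have hC1nn : 0 ≤ C1 := le_trans (abs_nonneg _) (hC1 0)
  have hC2nn : 0 ≤ C2 := le_trans (abs_nonneg _) (hC2 0)
  set M : ℝ := 2 + 2 * C1 + C2 with hM
  have hMpos : 0 < M := by positivity
  set K : ℝ := 2 * Real.sqrt 2 * M with hK
  -- the squeeze
  have hupper : Filter.Tendsto (fun n : ℕ => ENNReal.ofReal (K / n))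
      Filter.atTop (nhds 0) := by
    rw [← ENNReal.ofReal_zero]
    exact (ENNReal.continuous_ofReal.tendsto 0).comp
      (tendsto_const_div_atTop_nhds_zero_nat K)
  refine tendsto_of_tendsto_of_tendsto_of_le_of_le' tendsto_const_nhds hupper
    (Filter.Eventually.of_forall fun n => by simp) ?_
  rw [Filter.eventually_atTop]
  refine ⟨16, fun n hn => ?_⟩
  -- Now the main estimate for fixed n ≥ 16.
  have hn1 : (1:ℝ) ≤ (n:ℝ) := by exact_mod_cast (by omega : 1 ≤ n)
  have hn0 : (0:ℝ) < (n:ℝ) := by linarith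
  have hn16 : (16:ℝ) ≤ (n:ℝ) := by exact_mod_cast hn
  set s : ℝ := Real.sqrt (n:ℝ) with hsdef
  have hs1 : 1 ≤ s := by
    rw [hsdef, Real.le_sqrt one_pos.le hn0.le]; nlinarith
  have hs0 : 0 < s := lt_of_lt_of_le one_pos hs1
  have hss : s * s = (n:ℝ) := Real.mul_self_sqrt hn0.le
  have hs4 : 4 ≤ s := by
    rw [hsdef, Real.le_sqrt (by norm_num) hn0.le]; nlinarith
  set c : ℝ := x₀ n with hc
  set u : ℝ → ℝ := fun x => (x - c) / (n:ℝ) with hu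
  set Ψ : ℝ → ℝ := fun x => Real.sin (x / s) * χ (u x) with hΨdef
  have hψn : ψ n = Ψ := funext fun x => hψ n x
  -- outside the interval everything vanishes
  have hout : ∀ x : ℝ, x ∉ Set.Icc (c - n) (c + n) → u x ∉ Set.Icc (-1:ℝ) 1 := by
    intro x hx'
    simp only [Set.mem_Icc, not_and_or, not_le] at hx' ⊢
    rcases hx' with h | h
    · left; rw [hu]; rw [div_lt_iff₀ hn0]; linarith
    · right; rw [hu]; rw [lt_div_iff₀ hn0]; linarith
  -- derivatives of Ψ
  have hud : ∀ x : ℝ, HasDerivAt u (1 / (n:ℝ)) x := by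
    intro x
    simpa using ((hasDerivAt_id x).sub_const c).div_const (n:ℝ)
  have htd : ∀ x : ℝ, HasDerivAt (fun x : ℝ => x / s) (1 / s) x := by
    intro x
    simpa using (hasDerivAt_id x).div_const s
  have hsind : ∀ x : ℝ, HasDerivAt (fun x : ℝ => Real.sin (x / s))
      (Real.cos (x / s) * (1 / s)) x := fun x =>
    (htd x).sin
  have hcosd : ∀ x : ℝ, HasDerivAt (fun x : ℝ => Real.cos (x / s))
      (-Real.sin (x / s) * (1 / s)) x := fun x =>
    (htd x).cos
  have hchid : ∀ x : ℝ, HasDerivAt (fun x : ℝ => χ (u x))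
      (deriv χ (u x) * (1 / (n:ℝ))) x := fun x =>
    ((hχd (u x)).hasDerivAt).comp x (hud x)
  have hchi'd : ∀ x : ℝ, HasDerivAt (fun x : ℝ => deriv χ (u x))
      (deriv (deriv χ) (u x) * (1 / (n:ℝ))) x := fun x =>
    ((hχ'd (u x)).hasDerivAt).comp x (hud x)
  set Ψ₁ : ℝ → ℝ := fun x => Real.cos (x / s) * (1 / s) * χ (u x)
    + Real.sin (x / s) * (deriv χ (u x) * (1 / (n:ℝ))) with hΨ₁def
  have hΨd : ∀ x : ℝ, HasDerivAt Ψ (Ψ₁ x) x := fun x => (hsind x).mul (hchid x)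
  set Ψ₂ : ℝ → ℝ := fun x =>
    (-Real.sin (x / s) * (1 / s) * (1 / s) * χ (u x)
      + Real.cos (x / s) * (1 / s) * (deriv χ (u x) * (1 / (n:ℝ))))
    + (Real.cos (x / s) * (1 / s) * (deriv χ (u x) * (1 / (n:ℝ)))
      + Real.sin (x / s) * (deriv (deriv χ) (u x) * (1 / (n:ℝ)) * (1 / (n:ℝ)))) with hΨ₂def
  have hΨ₁d : ∀ x : ℝ, HasDerivAt Ψ₁ (Ψ₂ x) x := by
    intro x
    exact (((hcosd x).mul_const (1 / s)).mul (hchid x)).add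
      ((hsind x).mul ((hchi'd x).mul_const (1 / (n:ℝ))))
  have hderiv2 : deriv (deriv Ψ) = Ψ₂ := by
    have h1 : deriv Ψ = Ψ₁ := funext fun x => (hΨd x).deriv
    rw [h1]
    exact funext fun x => (hΨ₁d x).deriv
  -- the error function
  set N : ℝ := (eLpNorm (ψ n) 2 volume).toReal with hN
  set err : ℝ → ℝ := fun x => -Ψ₂ x + (V x - E) * Ψ x with herrdef
  have hφeq : (fun x => (-(deriv (deriv (φ n)) x) + V x * φ n x) - E * φ n x)
      = (N⁻¹ : ℝ) • err := by
    have hφn : φ n = fun x => Ψ x / N := funext fun x => by rw [hφ n x, hψ n x]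
    have hd1 : deriv (φ n) = fun x => deriv Ψ x / N := by
      rw [hφn]; exact funext fun x => deriv_div_const N
    funext x
    have hd2 : deriv (deriv (φ n)) x = deriv (deriv Ψ) x / N := by
      rw [hd1]; exact deriv_div_const N
    rw [hd2, hderiv2, hφn]
    simp only [Pi.smul_apply, smul_eq_mul, herrdef]
    ring
  rw [hφeq, eLpNorm_const_smul]
  -- pointwise bound on err
  have h1n : (1:ℝ)/n ≤ 1 := by rw [div_le_one hn0]; exact hn1
  have h1s : (1:ℝ)/s ≤ 1 := by rw [div_le_one hs0]; exact hs1
  have hbound : ∀ᵐ x : ℝ, ‖err x‖ ≤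
      ‖Set.indicator (Set.Icc (c - n) (c + n)) (fun _ => M / n) x‖ := by
    have hfin : volume ({c - (n:ℝ), c + (n:ℝ)} : Set ℝ) = 0 :=
      (Set.toFinite _).measure_zero _
    filter_upwards [measure_eq_zero_iff_ae_notMem.mp hfin] with x hxmem
    simp only [Set.mem_insert_iff, Set.mem_singleton_iff, not_or] at hxmem
    by_cases hxI : x ∈ Set.Icc (c - (n:ℝ)) (c + n)
    · have hxO : x ∈ Set.Ioo (c - (n:ℝ)) (c + n) := by
        rcases hxI with ⟨ha, hb⟩
        exact ⟨lt_of_le_of_ne ha (Ne.symm hxmem.1), lt_of_le_of_ne hb hxmem.2⟩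
      have hVx : |V x - E| ≤ 1 / n := hx n (by omega) x hxO
      have hsin : |Real.sin (x/s)| ≤ 1 := Real.abs_sin_le_one _
      have hcos : |Real.cos (x/s)| ≤ 1 := Real.abs_cos_le_one _
      have hA : |χ (u x)| ≤ 1 :=
        abs_le.mpr ⟨by linarith [(hχrange (u x)).1], (hχrange (u x)).2⟩
      have habs1s : |(1:ℝ)/s| = 1/s := abs_of_pos (by positivity)
      have habs1n : |(1:ℝ)/(n:ℝ)| = 1/n := abs_of_pos (by positivity)
      have e1 : |Real.sin (x/s) * (1/s) * (1/s) * χ (u x)| ≤ 1/n := by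
        rw [abs_mul, abs_mul, abs_mul, habs1s]
        calc |Real.sin (x/s)| * (1/s) * (1/s) * |χ (u x)|
            ≤ 1 * (1/s) * (1/s) * 1 := by gcongr <;> positivity
          _ = 1/n := by
              rw [one_mul, mul_one, div_mul_div_comm, one_mul, hss]
      have e2 : |Real.cos (x/s) * (1/s) * (deriv χ (u x) * (1/(n:ℝ)))| ≤ C1/n := by
        rw [abs_mul, abs_mul, abs_mul, habs1s, habs1n]
        calc |Real.cos (x/s)| * (1/s) * (|deriv χ (u x)| * (1/n))
            ≤ 1 * 1 * (C1 * (1/n)) := by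
              gcongr <;> first | positivity | exact hcos | exact h1s | exact hC1 _
          _ = C1/n := by ring
      have e3 : |Real.sin (x/s) * (deriv (deriv χ) (u x) * (1/(n:ℝ)) * (1/(n:ℝ)))| ≤ C2/n := by
        rw [abs_mul, abs_mul, abs_mul, habs1n]
        calc |Real.sin (x/s)| * (|deriv (deriv χ) (u x)| * (1/n) * (1/n))
            ≤ 1 * (C2 * (1/n) * 1) := by
              gcongr <;> first | positivity | exact hsin | exact hC2 _ | exact h1n
          _ ≤ C2/n := by rw [one_mul, mul_one]; ring_nf; exact le_rfl
      have e4 : |(V x - E) * Ψ x| ≤ 1/n := by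
        rw [abs_mul]
        have hΨb : |Ψ x| ≤ 1 := by
          simp only [hΨdef, abs_mul]
          exact mul_le_one₀ hsin (abs_nonneg _) hA
        calc |V x - E| * |Ψ x| ≤ (1/n) * 1 := by
              gcongr <;> first | positivity | exact hVx | exact hΨb
          _ = 1/n := mul_one _
      have herrb : |err x| ≤ M / n := by
        have hsplit : |err x| ≤ |Ψ₂ x| + |(V x - E) * Ψ x| := by
          calc |err x| = |-Ψ₂ x + (V x - E) * Ψ x| := rfl
            _ ≤ |-Ψ₂ x| + |(V x - E) * Ψ x| := abs_add_le _ _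
            _ = |Ψ₂ x| + |(V x - E) * Ψ x| := by rw [abs_neg]
        have hΨ₂b : |Ψ₂ x| ≤ 1/n + C1/n + (C1/n + C2/n) := by
          calc |Ψ₂ x| ≤ |(-Real.sin (x / s) * (1 / s) * (1 / s) * χ (u x)
                + Real.cos (x / s) * (1 / s) * (deriv χ (u x) * (1 / (n:ℝ))))|
              + |(Real.cos (x / s) * (1 / s) * (deriv χ (u x) * (1 / (n:ℝ)))
                + Real.sin (x / s) * (deriv (deriv χ) (u x) * (1 / (n:ℝ)) * (1 / (n:ℝ))))| :=
                abs_add_le _ _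
            _ ≤ (1/n + C1/n) + (C1/n + C2/n) := by
                refine add_le_add (le_trans (abs_add_le _ _) (add_le_add ?_ e2))
                  (le_trans (abs_add_le _ _) (add_le_add e2 e3))
                rw [show -Real.sin (x / s) * (1 / s) * (1 / s) * χ (u x)
                    = -(Real.sin (x / s) * (1 / s) * (1 / s) * χ (u x)) by ring, abs_neg]
                exact e1
            _ = 1/n + C1/n + (C1/n + C2/n) := by ring
        have hMn : M / n = 1/n + C1/n + (C1/n + C2/n) + 1/n := by rw [hM]; ring
        linarith
      rw [Set.indicator_of_mem hxI, Real.norm_eq_abs, Real.norm_eq_abs,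
        abs_of_nonneg (by positivity : (0:ℝ) ≤ M/(n:ℝ))]
      exact herrb
    · have h0 := hout x hxI
      have hA : χ (u x) = 0 := hχ0 _ h0
      have hB : deriv χ (u x) = 0 := hχ'0 _ h0
      have hD : deriv (deriv χ) (u x) = 0 := hχ''0 _ h0
      have herr0 : err x = 0 := by
        simp only [herrdef, hΨ₂def, hΨdef, hA, hB, hD]
        ring
      rw [herr0]
      simp
  have herr_le : eLpNorm err 2 volume ≤ ENNReal.ofReal ((M / n) * Real.sqrt (2 * n)) := by
    refine le_trans (eLpNorm_mono_ae hbound) ?_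
    rw [eLpNorm_indicator_const measurableSet_Icc two_ne_zero ENNReal.ofNat_ne_top]
    have hvol : volume (Set.Icc (c - (n:ℝ)) (c + (n:ℝ))) = ENNReal.ofReal (2*n) := by
      rw [Real.volume_Icc]; congr 1; ring
    have hexp : (1 / (2:ENNReal).toReal) = ((1:ℝ)/2) := by norm_num
    rw [hvol, hexp, Real.enorm_eq_ofReal (by positivity),
      ENNReal.ofReal_rpow_of_pos (by positivity),
      ← ENNReal.ofReal_mul (by positivity)]
    apply ENNReal.ofReal_le_ofReal
    rw [Real.sqrt_eq_rpow]
  -- lower bound on N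
  have hNlow : s / 2 ≤ N := by
    have hΨcont : Continuous Ψ := by
      rw [hΨdef]
      exact (Real.continuous_sin.comp (continuous_id.div_const s)).mul
        (hχ.continuous.comp ((continuous_id.sub continuous_const).div_const (n:ℝ)))
    have hΨ0 : ∀ x : ℝ, x ∉ Set.Icc (c - (n:ℝ)) (c + n) → Ψ x = 0 := by
      intro x hx'
      have hA : χ (u x) = 0 := hχ0 _ (hout x hx')
      simp only [hΨdef, hA, mul_zero]
    have hΨcs : HasCompactSupport Ψ := HasCompactSupport.intro isCompact_Icc hΨ0
    have hmem : MemLp (ψ n) 2 volume := by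
      rw [hψn]; exact hΨcont.memLp_of_hasCompactSupport hΨcs
    have hIint : Integrable (fun x => ψ n x ^ 2) volume := by
      rw [hψn]
      exact (hΨcont.pow 2).integrable_of_hasCompactSupport
        (HasCompactSupport.intro isCompact_Icc fun x hx' => by rw [Pi.pow_apply, hΨ0 x hx']; ring)
    set I : ℝ := ∫ x, ψ n x ^ 2 with hI
    have hInn : 0 ≤ I := integral_nonneg fun x => sq_nonneg _
    have hNI : N = I ^ ((2:ℝ))⁻¹ := by
      rw [hN, hmem.eLpNorm_eq_integral_rpow_norm two_ne_zero ENNReal.ofNat_ne_top]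
      have h2 : ((2:ENNReal)).toReal = (2:ℝ) := by simp
      rw [h2]
      have hfe : (fun x => ‖ψ n x‖ ^ (2:ℝ)) = fun x => ψ n x ^ 2 := by
        funext x
        rw [show (2:ℝ) = ((2:ℕ):ℝ) by norm_num, Real.rpow_natCast, Real.norm_eq_abs, sq_abs]
      rw [hfe, ENNReal.toReal_ofReal (Real.rpow_nonneg hInn _)]
    have hIlow : (s/2)^2 ≤ I := by
      set a' : ℝ := c - n/2 with ha'
      set b' : ℝ := c + n/2 with hb'
      have hab : a' ≤ b' := by rw [ha', hb']; linarith
      have hstep1 : ∫ x in Set.Icc a' b', ψ n x ^ 2 ≤ I :=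
        setIntegral_le_integral hIint (Filter.Eventually.of_forall fun x => sq_nonneg _)
      have hcong : ∫ x in Set.Icc a' b', ψ n x ^ 2
          = ∫ x in Set.Icc a' b', Real.sin (x/s) ^ 2 := by
        apply setIntegral_congr_fun measurableSet_Icc
        intro x hx'
        rcases hx' with ⟨hl, hr⟩
        have hu2 : u x ∈ Set.Icc (-(1:ℝ)/2) (1/2) := by
          constructor
          · show -(1:ℝ)/2 ≤ (x - c)/n
            rw [le_div_iff₀ hn0]
            rw [ha'] at hl
            linarith
          · show (x - c)/n ≤ 1/2
            rw [div_le_iff₀ hn0]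
            rw [hb'] at hr
            linarith
        rw [hψn]
        simp only [hΨdef]
        rw [hχ1 _ hu2, mul_one]
      have hval : s * (s - 2) / 2 ≤ ∫ x in Set.Icc a' b', Real.sin (x/s) ^ 2 := by
        rw [MeasureTheory.integral_Icc_eq_integral_Ioc,
          ← intervalIntegral.integral_of_le hab,
          intervalIntegral.integral_comp_div (f := fun t => Real.sin t ^ 2) hs0.ne',
          integral_sin_sq, smul_eq_mul]
        have hBA : b'/s - a'/s = s := by
          rw [div_sub_div_same]
          have h1 : b' - a' = (n:ℝ) := by rw [ha', hb']; ring
          rw [h1, ← hss]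
          exact mul_div_cancel_right₀ s hs0.ne'
        have p1 : -1 ≤ Real.sin (a'/s) * Real.cos (a'/s) := by
          nlinarith [Real.neg_one_le_sin (a'/s), Real.sin_le_one (a'/s),
            Real.neg_one_le_cos (a'/s), Real.cos_le_one (a'/s)]
        have p2 : Real.sin (b'/s) * Real.cos (b'/s) ≤ 1 := by
          nlinarith [Real.neg_one_le_sin (b'/s), Real.sin_le_one (b'/s),
            Real.neg_one_le_cos (b'/s), Real.cos_le_one (b'/s)]
        nlinarith [hs0, hBA, p1, p2]
      nlinarith [hs4, hs0, hval, hcong ▸ hstep1]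
    rw [hNI]
    calc s/2 = ((s/2)^2) ^ ((2:ℝ))⁻¹ := by
          rw [← Real.rpow_natCast (s/2) 2, ← Real.rpow_mul (by positivity)]
          norm_num
      _ ≤ I ^ ((2:ℝ))⁻¹ := Real.rpow_le_rpow (by positivity) hIlow (by norm_num)
  -- put everything together
  have hNinv : N⁻¹ ≤ 2 / s := by
    rw [div_eq_mul_inv]
    calc N⁻¹ ≤ (s / 2)⁻¹ := by
          apply inv_anti₀ (by positivity) hNlow
      _ = 2 * s⁻¹ := by rw [div_eq_mul_inv, mul_inv, inv_inv]; ring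
  calc (‖(N⁻¹ : ℝ)‖₊ : ENNReal) • eLpNorm err 2 volume
      ≤ ENNReal.ofReal (2 / s) * ENNReal.ofReal ((M / n) * Real.sqrt (2 * n)) := by
        rw [smul_eq_mul]
        apply mul_le_mul' ?_ herr_le
        rw [← Real.enorm_eq_ofReal (by positivity), enorm_eq_nnnorm]
        apply ENNReal.coe_le_coe.mpr
        simp only [← NNReal.coe_le_coe, coe_nnnorm, Real.norm_eq_abs]
        exact le_trans (le_of_eq (abs_of_nonneg (by positivity))) (le_trans hNinv (le_abs_self _))
    _ ≤ ENNReal.ofReal (K / n) := by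
        rw [← ENNReal.ofReal_mul (by positivity)]
        apply ENNReal.ofReal_le_ofReal
        have h2n : Real.sqrt (2 * n) = Real.sqrt 2 * s := by
          rw [hsdef, Real.sqrt_mul (by norm_num)]
        rw [h2n, hK]
        have heq : 2 / s * (M / ↑n * (Real.sqrt 2 * s)) = 2 * Real.sqrt 2 * M / ↑n := by
          field_simp
        rw [heq]
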